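/- For z ∈ ℂⁿ with z ≠ 0 and 0 < a, ε < 1, let B_{a,ε,z} = {ξ ∈ ℂⁿ \ {0} : ‖z/‖z‖ - ξ/‖ξ‖‖ < a and ‖z‖ ≤ ‖ξ‖ ≤ (1+ε)‖z‖}. Then there exist constants C₁, C₂ > 0, depending only on n, such that C₁ · a^{2n-1} · ε < Vol_{2n}(B_{a,ε,z}) < C₂ · a^{2n-1} · ε for every 0 < ε < 1/2, 0 < a < 1/2 and every z with 1/2 < ‖z‖ < 1-a. -/

import Mathlib

open MeasureTheory Filter Metric Topology ENNReal

noncomputable section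

/-- `ℂⁿ` with its Euclidean structure. -/
abbrev Cn (n : ℕ) : Type := EuclideanSpace ℂ (Fin n)

instance (n : ℕ) : MeasurableSpace (Cn n) := MeasurableSpace.comap WithLp.ofLp MeasurableSpace.pi

instance (n : ℕ) : BorelSpace (Cn n) := PiLp.borelSpace 2

instance (n : ℕ) : MeasureSpace (Cn n) :=
  ⟨(MeasureTheory.MeasureSpace.pi.volume : Measure (Fin n → ℂ)).map (WithLp.toLp 2)⟩

variable {n : ℕ}

/-- The "positive part" of an extended real number, as an element of `ℝ≥0∞`. -/
def EReal.posPart (x : EReal) : ℝ≥0∞ := if x = ⊤ then ⊤ else ENNReal.ofReal x.toReal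

/-- The (possibly infinite) integral of an `EReal`-valued function, defined as the
difference of the lower integrals of its positive and negative parts. -/
def erealIntegral {α : Type*} [MeasurableSpace α] (μ : Measure α) (f : α → EReal) : EReal :=
  ((∫⁻ a, (f a).posPart ∂μ : ℝ≥0∞) : EReal) - ((∫⁻ a, (-(f a)).posPart ∂μ : ℝ≥0∞) : EReal)

/-- A function `u : ℂⁿ → [-∞, ∞)` is plurisubharmonic on an (open) set `Ω` if it is upper
semicontinuous on `Ω`, takes values in `[-∞, ∞)` on `Ω`, and satisfies the sub-mean value
inequality on every circle (inside `Ω`) contained in a complex line. -/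
def PlurisubharmonicOn (Ω : Set (Cn n)) (u : Cn n → EReal) : Prop :=
  UpperSemicontinuousOn u Ω ∧ (∀ z ∈ Ω, u z ≠ ⊤) ∧
  ∀ z ∈ Ω, ∀ w : Cn n, ∀ r : ℝ, 0 < r →
    (∀ c : ℂ, ‖c‖ ≤ r → z + c • w ∈ Ω) →
    ((2 * Real.pi : ℝ) : EReal) * u z ≤
      erealIntegral (volume.restrict (Set.Ioc (0 : ℝ) (2 * Real.pi)))
        (fun θ => u (z + ((r : ℂ) * Complex.exp (θ * Complex.I)) • w))

/-- The second derivative of `f` at `z` evaluated on the pair of vectors `(v, w)`. -/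
def hess2 (f : Cn n → ℝ) (z v w : Cn n) : ℝ := iteratedFDeriv ℝ 2 f z ![v, w]

/-- The (diagonal of the) Levi form `L_f(z; v) = ∑ ∂²f/∂z_j∂z̄_k v_j v̄_k` of a real-valued
`C²` function, expressed via real second derivatives. -/
def leviForm (f : Cn n → ℝ) (z v : Cn n) : ℝ :=
  (hess2 f z v v + hess2 f z ((Complex.I : ℂ) • v) ((Complex.I : ℂ) • v)) / 4

/-- The complex derivative `∂f(z)(v) = ∑_j ∂f/∂z_j(z) v_j` of a real-valued function. -/
def wirtingerDeriv (f : Cn n → ℝ) (z v : Cn n) : ℂ :=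
  (((fderiv ℝ f z v : ℝ) : ℂ) - Complex.I * ((fderiv ℝ f z ((Complex.I : ℂ) • v) : ℝ) : ℂ)) / 2

/-- The complex Hessian matrix `(∂²f/∂z_j∂z̄_k(z))_{j,k}` of a real-valued function,
expressed via real second derivatives. -/
def complexHessian (f : Cn n → ℝ) (z : Cn n) : Matrix (Fin n) (Fin n) ℂ :=
  Matrix.of fun j k =>
    (((hess2 f z (EuclideanSpace.single j 1) (EuclideanSpace.single k 1)
        + hess2 f z ((Complex.I : ℂ) • EuclideanSpace.single j 1)
            ((Complex.I : ℂ) • EuclideanSpace.single k 1)) / 4 : ℝ) : ℂ)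
    + Complex.I * (((hess2 f z (EuclideanSpace.single j 1)
            ((Complex.I : ℂ) • EuclideanSpace.single k 1)
        - hess2 f z ((Complex.I : ℂ) • EuclideanSpace.single j 1)
            (EuclideanSpace.single k 1)) / 4 : ℝ) : ℂ)

/-- The density of the Monge–Ampère measure `(dd^c f)^n` of a `C²` function `f` with respect
to Lebesgue measure: `(dd^c f)^n = 4^n n! det(∂²f/∂z_j∂z̄_k) dV`. -/
def maDensity (f : Cn n → ℝ) (z : Cn n) : ℝ :=
  (4 : ℝ) ^ n * (Nat.factorial n) * ((complexHessian f z).det).re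

/-- `v` is a decreasing sequence of `C²` plurisubharmonic functions on `Ω`
converging pointwise to `u`. -/
def IsSmoothPshApprox (Ω : Set (Cn n)) (u : Cn n → EReal) (v : ℕ → Cn n → ℝ) : Prop :=
  (∀ j, ContDiffOn ℝ 2 (v j) Ω) ∧
  (∀ j, PlurisubharmonicOn Ω fun z => ((v j z : ℝ) : EReal)) ∧
  (∀ z ∈ Ω, Antitone fun j => v j z) ∧
  (∀ z ∈ Ω, Tendsto (fun j => ((v j z : ℝ) : EReal)) atTop (nhds (u z)))

/-- `μ` is the (Bedford–Taylor–Cegrell) Monge–Ampère measure `(dd^c u)^n` of `u` on `Ω`: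
there is at least one decreasing `C²` plurisubharmonic approximation of `u` on `Ω`, and along
every such approximation the smooth Monge–Ampère measures converge weakly to `μ`. -/
def IsMongeAmpereOf (Ω : Set (Cn n)) (u : Cn n → EReal) (μ : Measure (Cn n)) : Prop :=
  (∃ v, IsSmoothPshApprox Ω u v) ∧
  ∀ v, IsSmoothPshApprox Ω u v →
    ∀ f : Cn n → ℝ, Continuous f → HasCompactSupport f → tsupport f ⊆ Ω →
      Tendsto (fun j => ∫ z in Ω, f z * maDensity (v j) z) atTop (nhds (∫ z, f z ∂μ))

/-- The Monge–Ampère measure `(dd^c u)^n` of `u` on `Ω` (junk value if it does not exist). -/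
def mongeAmpere (Ω : Set (Cn n)) (u : Cn n → EReal) : Measure (Cn n) :=
  letI := Classical.propDecidable (∃ μ, IsMongeAmpereOf Ω u μ)
  if h : ∃ μ, IsMongeAmpereOf Ω u μ then h.choose else 0

/-- The Cegrell class `𝓔₀(Ω)`: bounded plurisubharmonic functions on `Ω` with boundary
limit `0` and finite total Monge–Ampère mass. -/
def InE0 (Ω : Set (Cn n)) (u : Cn n → EReal) : Prop :=
  PlurisubharmonicOn Ω u ∧
  (∃ C : ℝ, ∀ z ∈ Ω, ((-C : ℝ) : EReal) ≤ u z ∧ u z ≤ ((C : ℝ) : EReal)) ∧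
  (∀ ξ ∈ frontier Ω, Tendsto u (nhdsWithin ξ Ω) (nhds (0 : EReal))) ∧
  mongeAmpere Ω u Ω < ⊤

/-- The Cegrell class `𝓕(Ω)`: plurisubharmonic `u` admitting a decreasing sequence in
`𝓔₀(Ω)` converging pointwise to `u` with uniformly bounded Monge–Ampère masses. -/
def InCegrellF (Ω : Set (Cn n)) (u : Cn n → EReal) : Prop :=
  PlurisubharmonicOn Ω u ∧
  ∃ v : ℕ → Cn n → EReal,
    (∀ j, InE0 Ω (v j)) ∧
    (∀ z ∈ Ω, Antitone fun j => v j z) ∧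
    (∀ z ∈ Ω, Tendsto (fun j => v j z) atTop (nhds (u z))) ∧
    (⨆ j, mongeAmpere Ω (v j) Ω) < ⊤

/-- A bounded strictly pseudoconvex domain: a bounded domain `Ω = {ρ < 0}` for some `C²`
defining function `ρ` on a neighborhood of `closure Ω` with nonvanishing gradient on `∂Ω`
and `dd^c ρ ≥ c · dd^c |z|²` for some `c > 0`. -/
def IsStrictlyPseudoconvexDomain (Ω : Set (Cn n)) : Prop :=
  IsOpen Ω ∧ IsConnected Ω ∧ Bornology.IsBounded Ω ∧
  ∃ (U : Set (Cn n)) (ρ : Cn n → ℝ) (c : ℝ),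
    IsOpen U ∧ closure Ω ⊆ U ∧ ContDiffOn ℝ 2 ρ U ∧
    Ω = {z ∈ U | ρ z < 0} ∧
    (∀ z ∈ frontier Ω, fderiv ℝ ρ z ≠ 0) ∧
    0 < c ∧ (∀ z ∈ U, ∀ v : Cn n, c * ‖v‖ ^ 2 ≤ leviForm ρ z v)

/-- A bounded hyperconvex domain: a bounded domain carrying a negative plurisubharmonic
exhaustion function. -/
def IsHyperconvexDomain (Ω : Set (Cn n)) : Prop :=
  IsOpen Ω ∧ IsConnected Ω ∧ Bornology.IsBounded Ω ∧
  ∃ φ : Cn n → EReal, PlurisubharmonicOn Ω φ ∧ (∀ z ∈ Ω, φ z < 0) ∧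
    ∀ c : ℝ, c < 0 →
      IsCompact (closure {z ∈ Ω | φ z < (c : EReal)}) ∧
        closure {z ∈ Ω | φ z < (c : EReal)} ⊆ Ω

/-- A maximal plurisubharmonic function on `Ω`. -/
def IsMaximalPSH (Ω : Set (Cn n)) (u : Cn n → EReal) : Prop :=
  PlurisubharmonicOn Ω u ∧
  ∀ v, PlurisubharmonicOn Ω v → ∀ K : Set (Cn n), IsCompact K → K ⊆ Ω →
    (∀ z ∈ Ω \ K, v z ≤ u z) → ∀ z ∈ Ω, v z ≤ u z

/-- The Cegrell class `𝓝(Ω)`: plurisubharmonic functions in the domain of definition of the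
Monge–Ampère operator whose smallest maximal plurisubharmonic majorant is identically zero. -/
def InClassN (Ω : Set (Cn n)) (u : Cn n → EReal) : Prop :=
  PlurisubharmonicOn Ω u ∧ (∃ μ, IsMongeAmpereOf Ω u μ) ∧ (∀ z ∈ Ω, u z ≤ 0) ∧
  ∀ w, IsMaximalPSH Ω w → (∀ z ∈ Ω, u z ≤ w z) → ∀ z ∈ Ω, (0 : EReal) ≤ w z

/-- The upper semicontinuous regularization `v*` of a function `v`. -/
def uscRegularization (f : Cn n → EReal) (z : Cn n) : EReal := Filter.limsup f (nhds z)

/-!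
In polar coordinates a Haar measure on a `d`-dimensional space is the product of a measure `σ` on
the unit sphere and `r ^ (d - 1) dr` on `(0, ∞)`. The set `B_{a,ε,z}` is a polar box: the cap of
radius `a` around `z / ‖z‖` times the shell `[‖z‖, (1 + ε) ‖z‖]`, whose radial measure is of order
`ε` since `1/2 < ‖z‖ < 1`. The cap has `σ`-measure of order `a ^ (d - 1)`: the polar box over it
with radial interval `[1, 1 + a]` has radial factor of order `a`, contains a ball of radius `a / 8`
and lies in a ball of radius `3 a`, both of volume of order `a ^ d`.
-/

open Set Module

section Polar

variable {E : Type*} [NormedAddCommGroup E] [NormedSpace ℝ E]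

def polarSet (s : Set E) (t : Set ℝ) : Set E := {x | x ≠ 0 ∧ ‖x‖⁻¹ • x ∈ s ∧ ‖x‖ ∈ t}

lemma ball_subset_polarSet {e : E} (he : ‖e‖ = 1) {a : ℝ} (ha : 0 < a) :
    ball ((1 + a / 2) • e) (a / 8) ⊆ polarSet (ball e a) (Icc 1 (1 + a)) := by
  intro x hx
  rw [mem_ball, dist_eq_norm] at hx
  have hnorm : |‖x‖ - (1 + a / 2)| < a / 8 := by
    have hc : ‖(1 + a / 2) • e‖ = 1 + a / 2 := by
      rw [norm_smul, he, mul_one, Real.norm_eq_abs, abs_of_pos (by linarith)]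
    exact hc ▸ (abs_norm_sub_norm_le _ _).trans_lt hx
  obtain ⟨hlow, hupp⟩ := abs_lt.1 hnorm
  have hx1 : 1 < ‖x‖ := by linarith
  have hx0 : x ≠ 0 := norm_pos_iff.1 (by linarith)
  refine ⟨hx0, ?_, hx1.le, by linarith⟩
  rw [mem_ball, dist_eq_norm]
  calc ‖‖x‖⁻¹ • x - e‖ = ‖x‖⁻¹ * ‖x - ‖x‖ • e‖ := by
        rw [show ‖x‖⁻¹ • x - e = ‖x‖⁻¹ • (x - ‖x‖ • e) by
          rw [smul_sub, smul_smul, inv_mul_cancel₀ (norm_ne_zero_iff.2 hx0), one_smul],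
          norm_smul, norm_inv, norm_norm]
    _ ≤ ‖x - ‖x‖ • e‖ := mul_le_of_le_one_left (norm_nonneg _) (inv_le_one_of_one_le₀ hx1.le)
    _ ≤ ‖x - (1 + a / 2) • e‖ + ‖((1 + a / 2) - ‖x‖) • e‖ := by
        rw [show x - ‖x‖ • e = (x - (1 + a / 2) • e) + ((1 + a / 2) - ‖x‖) • e by
          rw [sub_smul]; abel]
        exact norm_add_le _ _
    _ < a / 8 + a / 8 := by
        rw [norm_smul, he, mul_one, Real.norm_eq_abs, abs_sub_comm]
        exact add_lt_add hx hnorm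
    _ < a := by linarith

lemma polarSet_subset_ball {e : E} (he : ‖e‖ = 1) {a : ℝ} (ha : 0 < a) (ha1 : a ≤ 1) :
    polarSet (ball e a) (Icc 1 (1 + a)) ⊆ ball e (3 * a) := by
  rintro x ⟨hx0, hdir, hx1, hxa⟩
  rw [mem_ball, dist_eq_norm] at hdir ⊢
  calc ‖x - e‖ ≤ ‖‖x‖ • (‖x‖⁻¹ • x - e)‖ + ‖(‖x‖ - 1) • e‖ := by
        rw [show x - e = ‖x‖ • (‖x‖⁻¹ • x - e) + (‖x‖ - 1) • e by
          rw [smul_sub, smul_smul, mul_inv_cancel₀ (norm_ne_zero_iff.2 hx0), one_smul,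
            sub_smul, one_smul]; abel]
        exact norm_add_le _ _
    _ = ‖x‖ * ‖‖x‖⁻¹ • x - e‖ + (‖x‖ - 1) := by
        rw [norm_smul, norm_norm, norm_smul, he, mul_one, Real.norm_eq_abs,
          abs_of_nonneg (by linarith)]
    _ < (1 + a) * a + a := by
        refine add_lt_add_of_lt_of_le ?_ (by linarith)
        exact mul_lt_mul_of_le_of_lt_of_nonneg_of_pos hxa hdir (norm_nonneg _) (by linarith)
    _ ≤ 3 * a := by nlinarith

end Polar

namespace MeasureTheory.Measure

lemma volumeIoiPow_preimage {t : Set ℝ} (ht : MeasurableSet t) (ht0 : t ⊆ Ioi 0) (k : ℕ) :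
    volumeIoiPow k (Subtype.val ⁻¹' t) = ∫⁻ r in t, ENNReal.ofReal (r ^ k) := by
  rw [volumeIoiPow, withDensity_apply _ (ht.preimage measurable_subtype_coe),
    setLIntegral_subtype measurableSet_Ioi _ fun r : ℝ => ENNReal.ofReal (r ^ k),
    Subtype.image_preimage_coe, inter_eq_right.2 ht0]

lemma ofReal_le_volumeIoiPow_Icc {u v : ℝ} (hu : 0 < u) (k : ℕ) :
    ENNReal.ofReal (u ^ k * (v - u)) ≤ volumeIoiPow k (Subtype.val ⁻¹' Icc u v) := by
  rw [volumeIoiPow_preimage measurableSet_Icc (fun r hr => hu.trans_le hr.1),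
    ENNReal.ofReal_mul (by positivity), ← Real.volume_Icc, ← setLIntegral_const]
  exact setLIntegral_mono (by fun_prop) fun r hr =>
    ENNReal.ofReal_le_ofReal (pow_le_pow_left₀ hu.le hr.1 k)

lemma volumeIoiPow_Icc_le {u v : ℝ} (hu : 0 < u) (k : ℕ) :
    volumeIoiPow k (Subtype.val ⁻¹' Icc u v) ≤ ENNReal.ofReal (v ^ k * (v - u)) := by
  rcases lt_or_ge v u with hvu | huv
  · simp [Icc_eq_empty_of_lt hvu]
  rw [volumeIoiPow_preimage measurableSet_Icc (fun r hr => hu.trans_le hr.1),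
    ENNReal.ofReal_mul (pow_nonneg (hu.le.trans huv) k), ← Real.volume_Icc, ← setLIntegral_const]
  exact setLIntegral_mono (by fun_prop) fun r hr =>
    ENNReal.ofReal_le_ofReal (pow_le_pow_left₀ (hu.le.trans hr.1) hr.2 k)

lemma ofReal_le_volumeIoiPow_shell {R ε : ℝ} (hR : 1 / 2 ≤ R) (hε : 0 ≤ ε) (k : ℕ) :
    ENNReal.ofReal ((1 / 2) ^ (k + 1) * ε) ≤
      volumeIoiPow k (Subtype.val ⁻¹' Icc R ((1 + ε) * R)) := by
  refine le_trans (ENNReal.ofReal_le_ofReal ?_) (ofReal_le_volumeIoiPow_Icc (by linarith) k)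
  calc (1 / 2) ^ (k + 1) * ε ≤ R ^ (k + 1) * ε := by gcongr
    _ = R ^ k * ((1 + ε) * R - R) := by ring

lemma volumeIoiPow_shell_le {R ε : ℝ} (hR : 0 < R) (hR1 : R ≤ 1) (hε : 0 ≤ ε) (hε1 : ε ≤ 1)
    (k : ℕ) :
    volumeIoiPow k (Subtype.val ⁻¹' Icc R ((1 + ε) * R)) ≤ ENNReal.ofReal (2 ^ k * ε) := by
  refine (volumeIoiPow_Icc_le hR k).trans (ENNReal.ofReal_le_ofReal ?_)
  calc ((1 + ε) * R) ^ k * ((1 + ε) * R - R) = ((1 + ε) * R) ^ k * (ε * R) := by ring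
    _ ≤ 2 ^ k * ε := by
      gcongr
      · nlinarith
      · exact mul_le_of_le_one_right hε hR1

variable {E : Type*} [NormedAddCommGroup E] [NormedSpace ℝ E] [FiniteDimensional ℝ E]
  [MeasurableSpace E] [BorelSpace E] (μ : Measure E) [μ.IsAddHaarMeasure]

lemma measure_polarSet {s : Set E} (hs : MeasurableSet s) {t : Set ℝ} (ht : MeasurableSet t) :
    μ (polarSet s t) = μ.toSphere (Subtype.val ⁻¹' s) *
      volumeIoiPow (finrank ℝ E - 1) (Subtype.val ⁻¹' t) := by
  have hne : MeasurableSet ({0}ᶜ : Set E) := (measurableSet_singleton 0).compl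
  have hpre : (Subtype.val ⁻¹' polarSet s t : Set ({0}ᶜ : Set E)) =
      homeomorphUnitSphereProd E ⁻¹' ((Subtype.val ⁻¹' s) ×ˢ (Subtype.val ⁻¹' t)) := by
    ext ⟨x, hx⟩
    simp [polarSet, homeomorphUnitSphereProd, show x ≠ 0 from hx]
  calc μ (polarSet s t)
        = μ.comap Subtype.val (Subtype.val ⁻¹' polarSet s t : Set ({0}ᶜ : Set E)) := by
        rw [comap_subtype_coe_apply hne, Subtype.image_preimage_coe,
          inter_eq_right.2 fun x hx => hx.1]
    _ = _ := by
        rw [hpre, μ.measurePreserving_homeomorphUnitSphereProd.measure_preimage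
          ((hs.preimage measurable_subtype_coe).prod
            (ht.preimage measurable_subtype_coe)).nullMeasurableSet, prod_prod]

variable {e : E} {a : ℝ}

lemma ofReal_le_toSphere_ball (he : ‖e‖ = 1) (ha : 0 < a) (ha1 : a ≤ 1) :
    ENNReal.ofReal (μ.real (ball 0 1) / (8 ^ finrank ℝ E * 2 ^ (finrank ℝ E - 1)) *
        a ^ (finrank ℝ E - 1)) ≤ μ.toSphere (Subtype.val ⁻¹' ball e a) := by
  have : Nontrivial E := nontrivial_of_ne e 0 (norm_ne_zero_iff.1 (he ▸ one_ne_zero))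
  obtain ⟨k, hk⟩ := Nat.exists_eq_add_one_of_ne_zero (finrank_pos (R := ℝ) (M := E)).ne'
  rw [hk, Nat.add_sub_cancel]
  have hK : volumeIoiPow k (Subtype.val ⁻¹' Icc 1 (1 + a)) ≤
      ENNReal.ofReal (2 ^ k * a) := by
    refine (volumeIoiPow_Icc_le one_pos _).trans (ENNReal.ofReal_le_ofReal ?_)
    rw [add_sub_cancel_left]
    gcongr
    linarith
  rw [← ENNReal.mul_le_mul_iff_left (c := ENNReal.ofReal (2 ^ k * a))
    (ENNReal.ofReal_pos.2 (by positivity)).ne' ENNReal.ofReal_ne_top]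
  calc _ = μ (ball ((1 + a / 2) • e) (a / 8)) := by
        rw [μ.addHaar_ball _ (by positivity), ← ofReal_measureReal, hk,
          ← ENNReal.ofReal_mul (by positivity), ← ENNReal.ofReal_mul (by positivity)]
        congr 1
        rw [div_pow, pow_succ, pow_succ]
        field_simp
    _ ≤ μ (polarSet (ball e a) (Icc 1 (1 + a))) := measure_mono (ball_subset_polarSet he ha)
    _ ≤ _ := by
        rw [measure_polarSet μ measurableSet_ball measurableSet_Icc, hk, Nat.add_sub_cancel]
        gcongr

lemma toSphere_ball_le (he : ‖e‖ = 1) (ha : 0 < a) (ha1 : a ≤ 1) :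
    μ.toSphere (Subtype.val ⁻¹' ball e a) ≤
      ENNReal.ofReal (3 ^ finrank ℝ E * μ.real (ball 0 1) * a ^ (finrank ℝ E - 1)) := by
  have : Nontrivial E := nontrivial_of_ne e 0 (norm_ne_zero_iff.1 (he ▸ one_ne_zero))
  obtain ⟨k, hk⟩ := Nat.exists_eq_add_one_of_ne_zero (finrank_pos (R := ℝ) (M := E)).ne'
  rw [hk, Nat.add_sub_cancel]
  have hK : ENNReal.ofReal a ≤ volumeIoiPow k (Subtype.val ⁻¹' Icc 1 (1 + a)) := by
    simpa using ofReal_le_volumeIoiPow_Icc (v := 1 + a) one_pos k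
  rw [← ENNReal.mul_le_mul_iff_left (c := ENNReal.ofReal a)
    (ENNReal.ofReal_pos.2 (by positivity)).ne' ENNReal.ofReal_ne_top]
  calc _ ≤ μ (polarSet (ball e a) (Icc 1 (1 + a))) := by
        rw [measure_polarSet μ measurableSet_ball measurableSet_Icc, hk, Nat.add_sub_cancel]
        gcongr
    _ ≤ μ (ball e (3 * a)) := measure_mono (polarSet_subset_ball he ha ha1)
    _ = _ := by
        rw [μ.addHaar_ball _ (by positivity), ← ofReal_measureReal, hk,
          ← ENNReal.ofReal_mul (by positivity), ← ENNReal.ofReal_mul (by positivity)]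
        congr 1
        ring

end MeasureTheory.Measure

open MeasureTheory Measure

instance : (volume : Measure (Cn n)).IsAddHaarMeasure := by
  have h := (PiLp.continuousLinearEquiv 2 ℝ (fun _ : Fin n => ℂ)).symm.isAddHaarMeasure_map
    (volume : Measure (Fin n → ℂ))
  rwa [PiLp.coe_symm_continuousLinearEquiv] at h

lemma finrank_real_Cn : finrank ℝ (Cn n) = 2 * n := by
  rw [finrank_real_of_complex, finrank_euclideanSpace_fin]

theorem statement_13 {n : ℕ} :
    ∃ C₁ C₂ : ℝ, 0 < C₁ ∧ 0 < C₂ ∧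
      ∀ (a ε : ℝ) (z : Cn n), 0 < ε → ε < 1 / 2 → 0 < a → a < 1 / 2 →
        1 / 2 < ‖z‖ → ‖z‖ < 1 - a →
        ENNReal.ofReal (C₁ * a ^ (2 * n - 1) * ε) <
            volume {ξ : Cn n | ξ ≠ 0 ∧ ‖(‖z‖)⁻¹ • z - (‖ξ‖)⁻¹ • ξ‖ < a ∧
              ‖z‖ ≤ ‖ξ‖ ∧ ‖ξ‖ ≤ (1 + ε) * ‖z‖} ∧
          volume {ξ : Cn n | ξ ≠ 0 ∧ ‖(‖z‖)⁻¹ • z - (‖ξ‖)⁻¹ • ξ‖ < a ∧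
              ‖z‖ ≤ ‖ξ‖ ∧ ‖ξ‖ ≤ (1 + ε) * ‖z‖} <
            ENNReal.ofReal (C₂ * a ^ (2 * n - 1) * ε) := by
  set V := (volume : Measure (Cn n)).real (ball 0 1)
  have hV : 0 < V := ENNReal.toReal_pos (measure_ball_pos _ _ one_pos).ne' measure_ball_lt_top.ne
  set m := 2 * n - 1
  refine ⟨V / (8 ^ (2 * n) * 2 ^ m) * (1 / 2) ^ (m + 1) / 2, 3 ^ (2 * n) * V * 2 ^ m * 2,
    by positivity, by positivity, ?_⟩
  intro a ε z hε hε2 ha ha2 hz hza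
  set R := ‖z‖
  have hR : 0 < R := by linarith
  have he : ‖R⁻¹ • z‖ = 1 := by rw [norm_smul, norm_inv, norm_norm, inv_mul_cancel₀ hR.ne']
  have hB : {ξ : Cn n | ξ ≠ 0 ∧ ‖R⁻¹ • z - (‖ξ‖)⁻¹ • ξ‖ < a ∧ R ≤ ‖ξ‖ ∧ ‖ξ‖ ≤ (1 + ε) * R} =
      polarSet (ball (R⁻¹ • z) a) (Icc R ((1 + ε) * R)) := by
    ext ξ
    simp only [polarSet, mem_ofPred_eq, mem_ball, dist_comm _ (R⁻¹ • z), dist_eq_norm, mem_Icc]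
  have hcap_lo := volume.ofReal_le_toSphere_ball he ha (by linarith)
  have hcap_hi := volume.toSphere_ball_le he ha (by linarith)
  rw [finrank_real_Cn] at hcap_lo hcap_hi
  rw [hB, measure_polarSet volume measurableSet_ball measurableSet_Icc, finrank_real_Cn]
  constructor
  · calc _ < ENNReal.ofReal (V / (8 ^ (2 * n) * 2 ^ m) * a ^ m) *
          ENNReal.ofReal ((1 / 2) ^ (m + 1) * ε) := by
          rw [← ENNReal.ofReal_mul (by positivity), ENNReal.ofReal_lt_ofReal_iff (by positivity)]
          linarith [show 0 < V / (8 ^ (2 * n) * 2 ^ m) * a ^ m * ((1 / 2) ^ (m + 1) * ε) by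
            positivity]
      _ ≤ _ := mul_le_mul' hcap_lo (ofReal_le_volumeIoiPow_shell hz.le hε.le m)
  · calc _ ≤ ENNReal.ofReal (3 ^ (2 * n) * V * a ^ m) * ENNReal.ofReal (2 ^ m * ε) :=
          mul_le_mul' hcap_hi (volumeIoiPow_shell_le hR (by linarith) hε.le (by linarith) m)
      _ < _ := by
          rw [← ENNReal.ofReal_mul (by positivity), ENNReal.ofReal_lt_ofReal_iff (by positivity)]
          linarith [show 0 < 3 ^ (2 * n) * V * a ^ m * (2 ^ m * ε) by positivity]
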